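/- arXiv:2307.07363 — 9 statements merged into one kernel-verified Lean document; each statement's English description precedes it below -/
import Mathlib

section
/- If a(x) and b(x) are monic polynomials with nonnegative real coefficients, a(0) = b(0) = 1, and a(x)b(x) has all coefficients in {0,1}, then every coefficient of a(x) and of b(x) lies in the interval [0,1]. -/
open Polynomial

theorem coeffs_le_one (a b : ℝ[X]) (ha : a.Monic) (hb : b.Monic)
    (ha0 : a.coeff 0 = 1) (hb0 : b.coeff 0 = 1)
    (hann : ∀ n, 0 ≤ a.coeff n) (hbnn : ∀ n, 0 ≤ b.coeff n)
    (hab : ∀ n, (a * b).coeff n = 0 ∨ (a * b).coeff n = 1) :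
    (∀ n, a.coeff n ∈ Set.Icc (0 : ℝ) 1) ∧ (∀ n, b.coeff n ∈ Set.Icc (0 : ℝ) 1) := by
  have hc : ∀ n, (a * b).coeff n ≤ 1 := by
    intro n; rcases hab n with h | h <;> simp [h]
  have ha' : ∀ n, a.coeff n ≤ (a * b).coeff n := by
    intro n
    rw [coeff_mul]
    have hmem : (n, 0) ∈ Finset.HasAntidiagonal.antidiagonal n := by simp
    calc a.coeff n = a.coeff n * b.coeff 0 := by rw [hb0, mul_one]
      _ ≤ _ := Finset.single_le_sum (f := fun p => a.coeff p.1 * b.coeff p.2)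
          (fun p _ => mul_nonneg (hann p.1) (hbnn p.2)) hmem
  have hb' : ∀ n, b.coeff n ≤ (a * b).coeff n := by
    intro n
    rw [coeff_mul]
    have hmem : (0, n) ∈ Finset.HasAntidiagonal.antidiagonal n := by simp
    calc b.coeff n = a.coeff 0 * b.coeff n := by rw [ha0, one_mul]
      _ ≤ _ := Finset.single_le_sum (f := fun p => a.coeff p.1 * b.coeff p.2)
          (fun p _ => mul_nonneg (hann p.1) (hbnn p.2)) hmem
  exact ⟨fun n => ⟨hann n, (ha' n).trans (hc n)⟩,
         fun n => ⟨hbnn n, (hb' n).trans (hc n)⟩⟩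
end

section
/- There do not exist a real number t with 0 < t < 1 and a polynomial b(x) with nonnegative real coefficients, b(0) = 1, monic, such that (1 + t x + x^3) · b(x) has all coefficients in {0,1}. -/
open Polynomial

/-!
Write `c n` for the coefficients of `(1 + t X + X³) b`. From `b₀ = 1` and `bₙ ≥ 0`, the coefficients
`c₁ = b₁ + t` and `c₂ = b₂ + t b₁` are positive, hence equal to `1`; this forces `b₁ = 1 - t` and
`b₂ = 1 - t + t²`. But then `c₃ = b₃ + t b₂ + b₀ ≥ 1 + t (1 - t + t²) > 1`.
-/

section Trinomial

variable {R : Type*} [CommSemiring R] (t : R) (b : R[X])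

theorem coeff_one_trinomial_mul :
    ((1 + C t * X + X ^ 3) * b).coeff 1 = b.coeff 1 + t * b.coeff 0 := by
  simp [add_mul, mul_assoc, coeff_X_mul, coeff_X_pow_mul']

theorem coeff_two_trinomial_mul :
    ((1 + C t * X + X ^ 3) * b).coeff 2 = b.coeff 2 + t * b.coeff 1 := by
  simp [add_mul, mul_assoc, coeff_X_mul, coeff_X_pow_mul']

theorem coeff_three_trinomial_mul :
    ((1 + C t * X + X ^ 3) * b).coeff 3 = b.coeff 3 + t * b.coeff 2 + b.coeff 0 := by
  simp [add_mul, mul_assoc, coeff_X_mul, coeff_X_pow_mul']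

end Trinomial

theorem no_unfair_one_tx_x3 :
    ¬ ∃ (t : ℝ) (b : ℝ[X]), 0 < t ∧ t < 1 ∧ b.Monic ∧ b.coeff 0 = 1 ∧
      (∀ n, 0 ≤ b.coeff n) ∧
      (∀ n, ((1 + C t * X + X ^ 3) * b).coeff n = 0 ∨
            ((1 + C t * X + X ^ 3) * b).coeff n = 1) := by
  rintro ⟨t, b, ht0, ht1, -, hb0, hnn, hc⟩
  have hb1 : b.coeff 1 = 1 - t := by
    have h := (hc 1).resolve_left
    rw [coeff_one_trinomial_mul, hb0] at h
    linarith [h (by linarith [hnn 1])]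
  have hb2 : b.coeff 2 = 1 - t + t * t := by
    have h := (hc 2).resolve_left
    rw [coeff_two_trinomial_mul, hb1] at h
    linarith [h (by nlinarith [hnn 2])]
  have hc3 := hc 3
  rw [coeff_three_trinomial_mul, hb2, hb0] at hc3
  rcases hc3 with h | h <;> nlinarith [hnn 3]
end

section
/- There do not exist real numbers s, t with 0 < s < 1, 0 < t < 1 and a monic polynomial b(x) with nonnegative real coefficients, b(0) = 1, such that (1 + s x + t x^2 + x^5) · b(x) has all coefficients in {0,1}. -/
/-! Write `c = (1 + s x + t x² + x⁵) b` and `bₖ` for the coefficients of `b`, so `b₀ = 1`.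
Since every `bₖ ≥ 0`, each `cₖ` that is visibly positive must equal `1`. This forces
`b₁ = 1 - s` and `b₂ = 1 - t - s(1 - s)`, and `c₅ ≥ b₀ + t b₃` forces `b₃ = 0`. Then
`c₃ = s b₂ + t(1 - s)` is positive, but `1 - c₃ = (1 - s)(1 - t) + s t + s²(1 - s)` is positive too. -/

open Polynomial

lemma coeff_one_add_C_mul_X_add_C_mul_X_sq_add_X_pow_five_mul {R : Type*} [CommSemiring R]
    (s t : R) (b : R[X]) (n : ℕ) :
    ((1 + C s * X + C t * X ^ 2 + X ^ 5) * b).coeff n =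
      b.coeff n + s * (if 1 ≤ n then b.coeff (n - 1) else 0)
        + t * (if 2 ≤ n then b.coeff (n - 2) else 0)
        + (if 5 ≤ n then b.coeff (n - 5) else 0) := by
  rw [show (1 + C s * X + C t * X ^ 2 + X ^ 5) * b
      = b + C s * (b * X ^ 1) + C t * (b * X ^ 2) + b * X ^ 5 by ring]
  simp only [coeff_add, coeff_C_mul, coeff_mul_X_pow', mul_ite, mul_zero]

lemma false_of_low_coeffs_zero_or_one {s t b₁ b₂ b₃ b₄ b₅ : ℝ}
    (hs : 0 < s) (hs₁ : s < 1) (ht : 0 < t) (ht₁ : t < 1)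
    (hb₁ : 0 ≤ b₁) (hb₂ : 0 ≤ b₂) (hb₃ : 0 ≤ b₃) (hb₄ : 0 ≤ b₄) (hb₅ : 0 ≤ b₅)
    (hc₁ : b₁ + s = 0 ∨ b₁ + s = 1)
    (hc₂ : b₂ + s * b₁ + t = 0 ∨ b₂ + s * b₁ + t = 1)
    (hc₃ : b₃ + s * b₂ + t * b₁ = 0 ∨ b₃ + s * b₂ + t * b₁ = 1)
    (hc₅ : b₅ + s * b₄ + t * b₃ + 1 = 0 ∨ b₅ + s * b₄ + t * b₃ + 1 = 1) : False := by
  have hb₁_eq : b₁ = 1 - s := by linarith [hc₁.resolve_left (by positivity)]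
  subst hb₁_eq
  have hb₂_eq : b₂ = 1 - t - s * (1 - s) := by linarith [hc₂.resolve_left (by positivity)]
  subst hb₂_eq
  have hb₃_eq : b₃ = 0 := by
    have hc₅' := hc₅.resolve_left (by positivity)
    have : t * b₃ = 0 := by nlinarith [mul_nonneg hs.le hb₄]
    exact (mul_eq_zero.1 this).resolve_left ht.ne'
  subst hb₃_eq
  have hc₃' := hc₃.resolve_left (by nlinarith [mul_pos ht (sub_pos.2 hs₁)])
  have : 0 < (1 - s) * (1 - t) + s * t + s ^ 2 * (1 - s) := by
    have := sub_pos.2 hs₁; have := sub_pos.2 ht₁; positivity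
  nlinarith

theorem no_unfair_one_sx_tx2_x5 :
    ¬ ∃ (s t : ℝ) (b : ℝ[X]), 0 < s ∧ s < 1 ∧ 0 < t ∧ t < 1 ∧ b.Monic ∧ b.coeff 0 = 1 ∧
      (∀ n, 0 ≤ b.coeff n) ∧
      (∀ n, ((1 + C s * X + C t * X ^ 2 + X ^ 5) * b).coeff n = 0 ∨
            ((1 + C s * X + C t * X ^ 2 + X ^ 5) * b).coeff n = 1) := by
  rintro ⟨s, t, b, hs, hs₁, ht, ht₁, -, hb₀, hb, hc⟩
  have hc' := fun n => coeff_one_add_C_mul_X_add_C_mul_X_sq_add_X_pow_five_mul s t b n ▸ hc n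
  have hc₁ := hc' 1
  have hc₂ := hc' 2
  have hc₃ := hc' 3
  have hc₅ := hc' 5
  norm_num only [hb₀, mul_one, mul_zero, add_zero, if_true, if_false] at hc₁ hc₂ hc₃ hc₅
  exact false_of_low_coeffs_zero_or_one hs hs₁ ht ht₁ (hb 1) (hb 2) (hb 3) (hb 4) (hb 5) hc₁ hc₂ hc₃ hc₅
end

section
/- There do not exist real numbers s, t with 0 < s < 1, 0 < t < 1 and a monic polynomial b(x) with nonnegative real coefficients, b(0) = 1, such that (1 + s x + t x^4 + x^7) · b(x) has all coefficients in {0,1}. -/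
/-!
Write `c = (1 + s X + t X⁴ + X⁷) b`. For `n < 3` only the first two terms of the factor reach
`c_{n+1} = b_{n+1} + s b_n`, so inductively `0 < s b_n < 1` forces `c_{n+1} = 1` and
`b_{n+1} = 1 - s b_n ∈ (0, 1)`. In particular `b_3 > 0`, and then
`c_7 = b_7 + s b_6 + t b_3 + b_0 > b_0 = 1`.
-/

open Polynomial

section

variable (s t : ℝ) (b : ℝ[X])

lemma mul_eq_shifts :
    (1 + C s * X + C t * X ^ 4 + X ^ 7) * b = b + C s * (b * X ^ 1) + C t * (b * X ^ 4) + b * X ^ 7 := by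
  ring

lemma coeff_mul_succ_of_lt_three {n : ℕ} (hn : n < 3) :
    ((1 + C s * X + C t * X ^ 4 + X ^ 7) * b).coeff (n + 1) = b.coeff (n + 1) + s * b.coeff n := by
  rw [mul_eq_shifts]
  simp [coeff_C_mul, coeff_mul_X_pow', show ¬ 4 ≤ n + 1 by omega, show ¬ 7 ≤ n + 1 by omega]

lemma coeff_mul_seven :
    ((1 + C s * X + C t * X ^ 4 + X ^ 7) * b).coeff 7
      = b.coeff 7 + s * b.coeff 6 + t * b.coeff 3 + b.coeff 0 := by
  rw [mul_eq_shifts]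
  simp [coeff_C_mul, coeff_mul_X_pow']

end

lemma le_one_of_eq_zero_or_eq_one {x : ℝ} (hx : x = 0 ∨ x = 1) : x ≤ 1 := by
  rcases hx with rfl | rfl <;> norm_num

lemma coeff_mem_Ioc_of_le_three {s t : ℝ} {b : ℝ[X]} (hs0 : 0 < s) (hs1 : s < 1)
    (hb0 : b.coeff 0 = 1) (hb : ∀ n, 0 ≤ b.coeff n)
    (h01 : ∀ n, ((1 + C s * X + C t * X ^ 4 + X ^ 7) * b).coeff n = 0 ∨
      ((1 + C s * X + C t * X ^ 4 + X ^ 7) * b).coeff n = 1) :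
    ∀ n ≤ 3, b.coeff n ∈ Set.Ioc 0 1 := by
  intro n hn
  induction n with
  | zero => simp [hb0]
  | succ n ih =>
    obtain ⟨hpos, hle⟩ := ih (by omega)
    have hsb : 0 < s * b.coeff n := mul_pos hs0 hpos
    have hc1 : b.coeff (n + 1) + s * b.coeff n = 1 := by
      have hc := h01 (n + 1)
      rw [coeff_mul_succ_of_lt_three s t b (by omega)] at hc
      exact hc.resolve_left (add_pos_of_nonneg_of_pos (hb _) hsb).ne'
    constructor <;> nlinarith

theorem no_unfair_one_sx_tx4_x7 :
    ¬ ∃ (s t : ℝ) (b : ℝ[X]), 0 < s ∧ s < 1 ∧ 0 < t ∧ t < 1 ∧ b.Monic ∧ b.coeff 0 = 1 ∧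
      (∀ n, 0 ≤ b.coeff n) ∧
      (∀ n, ((1 + C s * X + C t * X ^ 4 + X ^ 7) * b).coeff n = 0 ∨
            ((1 + C s * X + C t * X ^ 4 + X ^ 7) * b).coeff n = 1) := by
  rintro ⟨s, t, b, hs0, hs1, ht0, -, -, hb0, hb, h01⟩
  have hb3 : 0 < b.coeff 3 := (coeff_mem_Ioc_of_le_three hs0 hs1 hb0 hb h01 3 le_rfl).1
  have h7 := le_one_of_eq_zero_or_eq_one (h01 7)
  rw [coeff_mul_seven, hb0] at h7
  linarith [hb 7, mul_pos ht0 hb3, mul_nonneg hs0.le (hb 6)]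
end

section
/- There do not exist a real number t with 0 < t < 1 and a monic polynomial b(x) with nonnegative real coefficients, b(0) = 1, such that (1 + t x + x^3) · b(x) is a 0-1 polynomial. -/
open Polynomial

lemma coeff123 (t : ℝ) (b : ℝ[X]) :
    ((1 + C t * X + X ^ 3) * b).coeff 1 = b.coeff 1 + t * b.coeff 0 ∧
    ((1 + C t * X + X ^ 3) * b).coeff 2 = b.coeff 2 + t * b.coeff 1 ∧
    ((1 + C t * X + X ^ 3) * b).coeff 3 = b.coeff 3 + t * b.coeff 2 + b.coeff 0 := by
  refine ⟨?_, ?_, ?_⟩ <;>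
  simp [add_mul, coeff_add, mul_assoc, coeff_C_mul, coeff_X_mul,
    mul_comm (X^3) b, coeff_mul_X_pow']

/-- The trinary-logic contradiction for the factor 1 + t x + x^3: no monic `b` with
nonnegative coefficients and constant term 1 makes the product a 0-1 polynomial. -/
theorem no_unfair_one_tx_x3' :
    ¬ ∃ (t : ℝ) (b : ℝ[X]), 0 < t ∧ t < 1 ∧ b.Monic ∧ b.coeff 0 = 1 ∧
      (∀ n, 0 ≤ b.coeff n) ∧
      (∀ n, ((1 + C t * X + X ^ 3) * b).coeff n = 0 ∨
            ((1 + C t * X + X ^ 3) * b).coeff n = 1) := by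
  rintro ⟨t, b, ht0, ht1, hm, hb0, hpos, h01⟩
  obtain ⟨c1, c2, c3⟩ := coeff123 t b
  have h1 := h01 1; have h2 := h01 2; have h3 := h01 3
  rw [c1, hb0] at h1; rw [c2] at h2; rw [c3, hb0] at h3
  have p1 := hpos 1; have p2 := hpos 2; have p3 := hpos 3
  -- from h1: b.coeff 1 = 1 - t
  have hb1 : b.coeff 1 = 1 - t := by
    rcases h1 with h | h
    · nlinarith
    · linarith
  -- from h3: b.coeff 2 = 0
  have hb2 : b.coeff 2 = 0 := by
    rcases h3 with h | h
    · nlinarith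
    · nlinarith
  rcases h2 with h | h <;> rw [hb1, hb2] at h <;> nlinarith
end

section
/- Let α = (√5 - 1)/2. There exist monic real polynomials a(x), b(x) with a(0) = b(0) = 1, all coefficients of a and b lying in the interval [-α, 1+α], at least one coefficient of b not in {0,1}, such that a(x)b(x) is a 0-1 polynomial. -/
/-!
Take `s = ψ = (1 - √5)/2`. Since `s² = s + 1`, the product
`(X² + sX + 1)(X⁴ - sX³ + (1+s)X² - sX + 1)` collapses to `X⁶ + X⁴ + X³ + X² + 1`. The coefficients involved are `0, 1, ψ, -ψ, 1 + ψ`, all in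
`[ψ, φ] = [-α, 1 + α]`, and `-ψ ≈ 0.618` is not in `{0, 1}`.
-/

open Polynomial Real goldenRatio

section Witness

variable {R : Type*} [CommRing R]

noncomputable def unfairFactorA (s : R) : R[X] := X ^ 2 + C s * X + 1

noncomputable def unfairFactorB (s : R) : R[X] :=
  X ^ 4 - C s * X ^ 3 + C (1 + s) * X ^ 2 - C s * X + 1

theorem unfairFactorA_mul_unfairFactorB {s : R} (hs : s ^ 2 = s + 1) :
    unfairFactorA s * unfairFactorB s = X ^ 6 + X ^ 4 + X ^ 3 + X ^ 2 + 1 := by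
  have hCs : (C s : R[X]) ^ 2 = C s + 1 := by rw [← C_pow, hs, C_add, C_1]
  simp only [unfairFactorA, unfairFactorB, C_add, C_1]
  linear_combination (X ^ 3 - X ^ 4 - X ^ 2 : R[X]) * hCs

theorem monic_unfairFactorA [Nontrivial R] (s : R) : (unfairFactorA s).Monic := by
  unfold unfairFactorA; monicity!

theorem monic_unfairFactorB [Nontrivial R] (s : R) : (unfairFactorB s).Monic := by
  unfold unfairFactorB; monicity!

theorem coeff_unfairFactorA_mem (s : R) (n : ℕ) :
    (unfairFactorA s).coeff n ∈ ({0, 1, s} : Set R) := by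
  rcases n with _ | _ | _ | n <;> simp [unfairFactorA, coeff_X, coeff_one, coeff_X_pow]

theorem coeff_unfairFactorB_mem (s : R) (n : ℕ) :
    (unfairFactorB s).coeff n ∈ ({0, 1, -s, 1 + s} : Set R) := by
  rcases n with _ | _ | _ | _ | _ | n <;> simp [unfairFactorB, coeff_X, coeff_one, -map_add]

theorem coeff_unfairFactorB_one (s : R) : (unfairFactorB s).coeff 1 = -s := by
  simp [unfairFactorB, coeff_one, -map_add]

theorem coeff_unfairFactorA_mul_unfairFactorB_mem {s : R} (hs : s ^ 2 = s + 1) (n : ℕ) :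
    (unfairFactorA s * unfairFactorB s).coeff n ∈ ({0, 1} : Set R) := by
  rw [unfairFactorA_mul_unfairFactorB hs]
  rcases n with _ | _ | _ | _ | _ | _ | _ | n <;> simp [coeff_one, coeff_X_pow]

end Witness

theorem insert_zero_one_goldenConj_subset_Icc : ({0, 1, ψ} : Set ℝ) ⊆ Set.Icc ψ φ := by
  simp only [Set.insert_subset_iff, Set.singleton_subset_iff, Set.mem_Icc]
  refine ⟨⟨?_, ?_⟩, ⟨?_, ?_⟩, ⟨?_, ?_⟩⟩ <;>
    linarith [goldenConj_neg, one_lt_goldenRatio]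

theorem insert_zero_one_neg_goldenConj_subset_Icc :
    ({0, 1, -ψ, 1 + ψ} : Set ℝ) ⊆ Set.Icc ψ φ := by
  simp only [Set.insert_subset_iff, Set.singleton_subset_iff, Set.mem_Icc]
  refine ⟨⟨?_, ?_⟩, ⟨?_, ?_⟩, ⟨?_, ?_⟩, ⟨?_, ?_⟩⟩ <;>
    linarith [goldenConj_neg, one_lt_goldenRatio, one_sub_goldenRatio]

theorem exists_alpha_unfair :
    ∃ a b : ℝ[X], a.Monic ∧ b.Monic ∧ a.coeff 0 = 1 ∧ b.coeff 0 = 1 ∧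
      (∀ n, a.coeff n ∈ Set.Icc (-((Real.sqrt 5 - 1) / 2)) (1 + (Real.sqrt 5 - 1) / 2)) ∧
      (∀ n, b.coeff n ∈ Set.Icc (-((Real.sqrt 5 - 1) / 2)) (1 + (Real.sqrt 5 - 1) / 2)) ∧
      (∃ n, b.coeff n ≠ 0 ∧ b.coeff n ≠ 1) ∧
      (∀ n, (a * b).coeff n = 0 ∨ (a * b).coeff n = 1) := by
  have hIcc : Set.Icc (-((√5 - 1) / 2)) (1 + (√5 - 1) / 2) = Set.Icc ψ φ := by
    congr 1 <;> ring
  rw [hIcc]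
  refine ⟨unfairFactorA ψ, unfairFactorB ψ, monic_unfairFactorA ψ, monic_unfairFactorB ψ,
    by simp [unfairFactorA], by simp [unfairFactorB],
    fun n => insert_zero_one_goldenConj_subset_Icc (coeff_unfairFactorA_mem ψ n),
    fun n => insert_zero_one_neg_goldenConj_subset_Icc (coeff_unfairFactorB_mem ψ n),
    ⟨1, ?_⟩, coeff_unfairFactorA_mul_unfairFactorB_mem goldenConj_sq⟩
  rw [coeff_unfairFactorB_one]
  constructor <;> linarith [goldenConj_neg, neg_one_lt_goldenConj]
end

section
/- If there exists an α-unfair 0-1 polynomial with a factor of degree k, then for all i ≥ 1 and 0 ≤ j ≤ i-1 there exists an α-unfair 0-1 polynomial with a factor of degree i·k + j. -/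
/-!
Substituting `x ↦ x^i` spreads the coefficients of a polynomial over the multiples of `i`,
and multiplying by `x^j + 1` with `0 < j < i` adds a copy shifted into the residue class `j`,
which does not overlap the first one. So for `A = a(x^i)(x^j + 1)` and `B = b(x^i)` every
coefficient of `A`, `B` and `A·B = (ab)(x^i)(x^j + 1)` is `0` or a coefficient of `a`, `b`
and `ab` respectively, while `B` keeps the coefficient of `b` outside `{0, 1}`. The factor
`A` has degree `i·k + j` (for `j = 0` take `A = a(x^i)` instead).
-/

open Polynomial

/-- There is an α-unfair 0-1 polynomial with a factor of degree `k`. -/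
def AlphaUnfairWithFactorDeg (α : ℝ) (k : ℕ) : Prop :=
  ∃ a b : ℝ[X], a.Monic ∧ b.Monic ∧ a.coeff 0 = 1 ∧ b.coeff 0 = 1 ∧
    (∀ n, a.coeff n ∈ Set.Icc (-α) (1 + α)) ∧
    (∀ n, b.coeff n ∈ Set.Icc (-α) (1 + α)) ∧
    (∃ n, b.coeff n ≠ 0 ∧ b.coeff n ≠ 1) ∧
    (∀ n, (a * b).coeff n = 0 ∨ (a * b).coeff n = 1) ∧
    a.natDegree = k

namespace Polynomial

theorem coeff_mem_of_range_coeff_subset {R : Type*} [Semiring R] {p q : R[X]} {S : Set R}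
    (h : Set.range p.coeff ⊆ insert 0 (Set.range q.coeff)) (h0 : 0 ∈ S)
    (hq : ∀ m, q.coeff m ∈ S) (n : ℕ) : p.coeff n ∈ S :=
  Set.range_subset_iff.1 (h.trans (Set.insert_subset h0 (Set.range_subset_iff.2 hq))) n

variable {R : Type*} [CommSemiring R]

theorem range_coeff_expand_subset {i : ℕ} (hi : 0 < i) (q : R[X]) :
    Set.range (expand R i q).coeff ⊆ insert 0 (Set.range q.coeff) := by
  rintro _ ⟨n, rfl⟩
  rw [coeff_expand hi]
  split_ifs
  exacts [Or.inr ⟨_, rfl⟩, Or.inl rfl]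

theorem range_coeff_expand_mul_X_pow_add_one_subset {i j : ℕ} (hj0 : 0 < j) (hji : j < i)
    (q : R[X]) :
    Set.range (expand R i q * (X ^ j + 1)).coeff ⊆ insert 0 (Set.range q.coeff) := by
  have hi : 0 < i := hj0.trans hji
  rintro _ ⟨n, rfl⟩
  rw [mul_add, mul_one, coeff_add, coeff_mul_X_pow']
  by_cases hn : i ∣ n
  · -- `n` and `n - j` cannot both be multiples of `i`, since `i ∤ j`
    have hshift : (if j ≤ n then (expand R i q).coeff (n - j) else 0) = 0 := by
      split_ifs with hjn
      · rw [coeff_expand hi, if_neg]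
        intro hd
        apply Nat.not_dvd_of_pos_of_lt hj0 hji
        simpa [Nat.sub_sub_self hjn] using Nat.dvd_sub hn hd
      · rfl
    rw [hshift, zero_add]
    exact range_coeff_expand_subset hi q ⟨n, rfl⟩
  · rw [coeff_expand hi q n, if_neg hn, add_zero]
    split_ifs
    exacts [range_coeff_expand_subset hi q ⟨_, rfl⟩, Or.inl rfl]

end Polynomial

theorem AlphaUnfairWithFactorDeg.expand_mul {α : ℝ} {k i : ℕ} (h : AlphaUnfairWithFactorDeg α k)
    (hi : 0 < i) {f : ℝ[X]} (hf : f.Monic) (hf0 : f.coeff 0 = 1)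
    (hcoeff : ∀ q : ℝ[X], Set.range (expand ℝ i q * f).coeff ⊆ insert 0 (Set.range q.coeff)) :
    AlphaUnfairWithFactorDeg α (i * k + f.natDegree) := by
  obtain ⟨a, b, ha, hb, ha0, hb0, haI, hbI, ⟨n, hn0, hn1⟩, hab, rfl⟩ := h
  have hzero : (0 : ℝ) ∈ Set.Icc (-α) (1 + α) := by
    have := haI 0
    rw [ha0] at this
    constructor <;> linarith [this.1, this.2]
  have hexpand_zero (q : ℝ[X]) : (expand ℝ i q).coeff 0 = q.coeff 0 := by
    simpa using coeff_expand_mul hi q 0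
  have hprod : expand ℝ i a * f * expand ℝ i b = expand ℝ i (a * b) * f := by
    rw [map_mul]
    ring
  refine ⟨expand ℝ i a * f, expand ℝ i b, (ha.expand hi).mul hf, hb.expand hi, ?_,
    by rw [hexpand_zero, hb0], coeff_mem_of_range_coeff_subset (hcoeff a) hzero haI,
    coeff_mem_of_range_coeff_subset (range_coeff_expand_subset hi b) hzero hbI,
    ⟨n * i, by rwa [coeff_expand_mul hi], by rwa [coeff_expand_mul hi]⟩, ?_, ?_⟩
  · rw [mul_coeff_zero, hexpand_zero, ha0, hf0, one_mul]
  · rw [hprod]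
    exact coeff_mem_of_range_coeff_subset (S := {x | x = 0 ∨ x = 1}) (hcoeff (a * b))
      (Or.inl rfl) hab
  · rw [(ha.expand hi).natDegree_mul hf, natDegree_expand, mul_comm]

theorem alpha_unfair_degrees (α : ℝ) (k : ℕ) (h : AlphaUnfairWithFactorDeg α k) :
    ∀ i : ℕ, 1 ≤ i → ∀ j : ℕ, j ≤ i - 1 → AlphaUnfairWithFactorDeg α (i * k + j) := by
  intro i hi j hj
  rcases Nat.eq_zero_or_pos j with rfl | hj0
  · simpa using h.expand_mul hi monic_one coeff_one_zero
      (fun q ↦ by simpa using range_coeff_expand_subset hi q)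
  · have hXj : ((X : ℝ[X]) ^ j + 1).Monic := by
      simpa using monic_X_pow_add_C (1 : ℝ) hj0.ne'
    have hXj0 : ((X : ℝ[X]) ^ j + 1).coeff 0 = 1 := by simp [hj0.ne]
    have hdeg : ((X : ℝ[X]) ^ j + 1).natDegree = j := by
      simpa using natDegree_X_pow_add_C (n := j) (r := (1 : ℝ))
    simpa [hdeg] using h.expand_mul hi hXj hXj0
      (range_coeff_expand_mul_X_pow_add_one_subset hj0 (by omega))
end

section
/- There do not exist real numbers s, t with 0 < s < 1, 0 < t < 1 and a monic polynomial b(x) with nonnegative real coefficients, b(0) = 1, such that (1 + s x + t x^2 + x^6) · b(x) has all coefficients in {0,1}. -/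
/-!
Write `c n` for the coefficients of the product and `bₙ` for those of `b`. Positivity forces
`c 1 = c 2 = c 3 = 1`, so `b₁ = 1 - s`, and `c 6 = b₆ + s b₅ + t b₄ + 1` forces `b₄ = b₅ = 0`.
Then `c 5 = t b₃` and `c 4 = t b₂` are below `1`, hence zero, so `b₂ = b₃ = 0` and
`c 3 = t (1 - s) < 1`, a contradiction.
-/

open Polynomial

lemma false_of_zero_one_low_coeffs {s t b₁ b₂ b₃ b₄ b₅ b₆ : ℝ} (hs : 0 < s) (hs₁ : s < 1)
    (ht : 0 < t) (ht₁ : t < 1) (hb₁ : 0 ≤ b₁) (hb₂ : 0 ≤ b₂) (hb₃ : 0 ≤ b₃) (hb₄ : 0 ≤ b₄)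
    (hb₅ : 0 ≤ b₅) (hb₆ : 0 ≤ b₆)
    (h₁ : b₁ + s = 0 ∨ b₁ + s = 1)
    (h₂ : b₂ + s * b₁ + t = 0 ∨ b₂ + s * b₁ + t = 1)
    (h₃ : b₃ + s * b₂ + t * b₁ = 0 ∨ b₃ + s * b₂ + t * b₁ = 1)
    (h₄ : b₄ + s * b₃ + t * b₂ = 0 ∨ b₄ + s * b₃ + t * b₂ = 1)
    (h₅ : b₅ + s * b₄ + t * b₃ = 0 ∨ b₅ + s * b₄ + t * b₃ = 1)
    (h₆ : b₆ + s * b₅ + t * b₄ + 1 = 0 ∨ b₆ + s * b₅ + t * b₄ + 1 = 1) : False := by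
  have hsb₂ := mul_nonneg hs.le hb₂
  have hsb₅ := mul_nonneg hs.le hb₅
  have htb₄ := mul_nonneg ht.le hb₄
  have e₁ : b₁ = 1 - s := by linarith [h₁.resolve_left (by linarith)]
  have e₂ : b₂ + s * b₁ + t = 1 := h₂.resolve_left (by nlinarith)
  have e₃ : b₃ + s * b₂ + t * b₁ = 1 := h₃.resolve_left (by nlinarith)
  have e₆ : b₆ + s * b₅ + t * b₄ + 1 = 1 := h₆.resolve_left (by linarith)
  have z₄ : b₄ = 0 := (mul_eq_zero.1 (by linarith : t * b₄ = 0)).resolve_left ht.ne'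
  have z₅ : b₅ = 0 := (mul_eq_zero.1 (by linarith : s * b₅ = 0)).resolve_left hs.ne'
  have z₃ : b₃ = 0 := by
    have : t * b₃ = 0 := by
      simpa [z₄, z₅] using h₅.resolve_right (by nlinarith)
    exact (mul_eq_zero.1 this).resolve_left ht.ne'
  have z₂ : b₂ = 0 := by
    have : t * b₂ = 0 := by
      simpa [z₄, z₃] using h₄.resolve_right (by nlinarith)
    exact (mul_eq_zero.1 this).resolve_left ht.ne'
  subst e₁ z₂ z₃
  nlinarith

theorem no_unfair_one_sx_tx2_x6 :
    ¬ ∃ (s t : ℝ) (b : ℝ[X]), 0 < s ∧ s < 1 ∧ 0 < t ∧ t < 1 ∧ b.Monic ∧ b.coeff 0 = 1 ∧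
      (∀ n, 0 ≤ b.coeff n) ∧
      (∀ n, ((1 + C s * X + C t * X ^ 2 + X ^ 6) * b).coeff n = 0 ∨
            ((1 + C s * X + C t * X ^ 2 + X ^ 6) * b).coeff n = 1) := by
  rintro ⟨s, t, b, hs, hs₁, ht, ht₁, -, hb₀, hb, hc⟩
  simp only [add_mul, one_mul, mul_assoc, coeff_add, coeff_C_mul, coeff_X_pow_mul'] at hc
  exact false_of_zero_one_low_coeffs hs hs₁ ht ht₁ (hb 1) (hb 2) (hb 3) (hb 4) (hb 5) (hb 6)
    (by simpa [hb₀] using hc 1) (by simpa [hb₀] using hc 2) (by simpa using hc 3)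
    (by simpa using hc 4) (by simpa using hc 5) (by simpa [hb₀] using hc 6)
end

section
/- There do not exist real numbers s, t, u with each in the open interval (0,1) and a monic polynomial b(x) with nonnegative real coefficients, b(0) = 1, such that (1 + s x + t x^2 + u x^3 + x^4) · b(x) has all coefficients in {0,1}. -/
open Polynomial

section

variable {R : Type*} [Semiring R]

theorem Polynomial.coeff_mul_one_eq (f g : R[X]) :
    (f * g).coeff 1 = f.coeff 0 * g.coeff 1 + f.coeff 1 * g.coeff 0 := by
  simp [coeff_mul, Finset.Nat.antidiagonal_succ]

variable [PartialOrder R] [IsOrderedRing R]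

theorem Polynomial.add_le_coeff_mul_of_nonneg {f g : R[X]} (hf : ∀ n, 0 ≤ f.coeff n)
    (hg : ∀ n, 0 ≤ g.coeff n) {n i j k l : ℕ} (hij : i + j = n) (hkl : k + l = n) (hik : i ≠ k) :
    f.coeff i * g.coeff j + f.coeff k * g.coeff l ≤ (f * g).coeff n := by
  have hne : (i, j) ≠ (k, l) := fun h => hik (Prod.ext_iff.mp h).1
  rw [coeff_mul, ← Finset.sum_pair (f := fun x : ℕ × ℕ => f.coeff x.1 * g.coeff x.2) hne]
  refine Finset.sum_le_sum_of_subset_of_nonneg ?_ fun x _ _ => mul_nonneg (hf _) (hg _)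
  simp [Finset.insert_subset_iff, hij, hkl]

end

theorem no_unfair_deg4 :
    ¬ ∃ (s t u : ℝ) (b : ℝ[X]), 0 < s ∧ s < 1 ∧ 0 < t ∧ t < 1 ∧ 0 < u ∧ u < 1 ∧
      b.Monic ∧ b.coeff 0 = 1 ∧ (∀ n, 0 ≤ b.coeff n) ∧
      (∀ n, ((1 + C s * X + C t * X ^ 2 + C u * X ^ 3 + X ^ 4) * b).coeff n = 0 ∨
            ((1 + C s * X + C t * X ^ 2 + C u * X ^ 3 + X ^ 4) * b).coeff n = 1) := by
  rintro ⟨s, t, u, b, hs0, hs1, ht0, -, hu0, -, -, hb0, hb, hprod⟩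
  set f := 1 + C s * X + C t * X ^ 2 + C u * X ^ 3 + X ^ 4
  have hf : ∀ n, 0 ≤ f.coeff n := by
    intro n
    simp only [f, coeff_add, coeff_C_mul, coeff_X_pow, coeff_one, coeff_X]
    split_ifs <;> positivity
  have hf0 : f.coeff 0 = 1 := by simp [f]
  have hf1 : f.coeff 1 = s := by simp [f, coeff_one]
  have hf3 : f.coeff 3 = u := by simp [f, coeff_one]
  have hf4 : f.coeff 4 = 1 := by simp [f, coeff_one]
  -- the coefficient of `x` is `b₁ + s > 0`, so it equals `1`, forcing `b₁ = 1 - s > 0`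
  have hb1 : b.coeff 1 = 1 - s := by
    rcases hprod 1 with h | h <;> rw [coeff_mul_one_eq, hf0, hf1, hb0] at h
    · linarith [hb 1]
    · linarith
  -- the terms `u x³ · b₁ x` and `x⁴ · b₀` alone push the coefficient of `x⁴` above `1`
  have h4 := add_le_coeff_mul_of_nonneg hf hb (n := 4) (i := 3) (j := 1) (k := 4) (l := 0)
    rfl rfl (by decide)
  rw [hf3, hf4, hb1, hb0] at h4
  rcases hprod 4 with h | h <;> linarith [mul_pos hu0 (sub_pos.mpr hs1)]
end
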